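/- Let M be a finite matroid representable over a field k. Then M is k-paintable: there exist functions c_C : C → k \ {0} for each circuit C and d_D : D → k \ {0} for each cocircuit D such that for every circuit C and cocircuit D, ∑_{e ∈ C ∩ D} c_C(e)·d_D(e) = 0. -/

import Mathlib

/-!
Let `f` represent `M`. A nontrivial linear relation among the vectors `f e`, `e ∈ C`, of a circuit
`C` has dependent support, so by minimality its support is all of `C`; its coefficients are `c_C`.
The complement of a cocircuit `D` is a nonspanning set which becomes spanning when any element of
`D` is added, so a linear functional `φ` vanishing on the span of `f (E \ D)` is nonzero at every
`f e` with `e ∈ D`; take `d_D e = φ (f e)`. Then `∑_{C ∩ D} c_C e * d_D e` is `φ` applied to the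
relation for `C`, hence zero.
-/

open Set

namespace Matroid

variable {α : Type*}

/-- A circuit of a matroid is a minimal dependent set. -/
def Circuit (M : Matroid α) (C : Set α) : Prop :=
  M.Dep C ∧ ∀ D, M.Dep D → D ⊆ C → D = C

/-- A cocircuit is a circuit of the dual matroid. -/
def Cocircuit (M : Matroid α) (D : Set α) : Prop := M✶.Circuit D

/-- The matroid obtained by deleting the set `D`. -/
def delete' (M : Matroid α) (D : Set α) : Matroid α := M ↾ (M.E \ D)

/-- The matroid obtained by contracting the set `C`. -/
def contract' (M : Matroid α) (C : Set α) : Matroid α := ((M✶).delete' C)✶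

/-- `N` is a minor of `M` if it is obtained from `M` by contracting a set `C`
and deleting a set `D`, where `C` and `D` are disjoint subsets of the ground set. -/
def IsMinor' (N M : Matroid α) : Prop :=
  ∃ C D, Disjoint C D ∧ C ∪ D ⊆ M.E ∧ N = (M.contract' C).delete' D

/-- A scrawl is a union of circuits. -/
def Scrawl (M : Matroid α) (W : Set α) : Prop :=
  ∃ S : Set (Set α), (∀ C ∈ S, M.Circuit C) ∧ W = ⋃₀ S

/-- A matroid is tame if every circuit-cocircuit intersection is finite. -/
def Tame (M : Matroid α) : Prop :=
  ∀ C D, M.Circuit C → M.Cocircuit D → (C ∩ D).Finite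

/-- A `k`-painting of a matroid: nonzero coefficients on each circuit and each
cocircuit such that each circuit-cocircuit pair is "orthogonal". -/
def IsPainting {k : Type*} [Field k] (M : Matroid α)
    (c : Set α → α → k) (d : Set α → α → k) : Prop :=
  (∀ C, M.Circuit C → ∀ e ∈ C, c C e ≠ 0) ∧
  (∀ D, M.Cocircuit D → ∀ e ∈ D, d D e ≠ 0) ∧
  (∀ C D, M.Circuit C → M.Cocircuit D →
    (C ∩ D).Finite ∧ ∑ᶠ e ∈ C ∩ D, c C e * d D e = 0)

end Matroid

open Submodule

lemma Finsupp.apply_linearCombination_eq_finsum_mem_inter {α k W : Type*} [Semiring k]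
    [AddCommMonoid W] [Module k W] {f : α → W} (c : α →₀ k) (φ : W →ₗ[k] k) {D : Set α}
    (hD : ∀ e ∈ c.support, e ∉ D → φ (f e) = 0) :
    φ (Finsupp.linearCombination k f c) = ∑ᶠ e ∈ (c.support : Set α) ∩ D, c e * φ (f e) := by
  rw [finsum_mem_inter_support_eq' _ _ c.support, finsum_mem_coe_finset,
    Finsupp.linearCombination_apply, Finsupp.sum, map_sum]
  · simp only [map_smul, smul_eq_mul]
  · intro e he
    refine ⟨fun h => h.1, fun h => ⟨h, by_contra fun heD => right_ne_zero_of_mul he ?_⟩⟩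
    exact hD e h heD

namespace Matroid

variable {α W : Type*} [AddCommGroup W]

def IsRep (M : Matroid α) (k : Type*) [Semiring k] [Module k W] (f : α → W) : Prop :=
  ∀ I, M.Indep I ↔ LinearIndepOn k f I

variable {k : Type*} [DivisionRing k] [Module k W] {M : Matroid α} {f : α → W}

namespace IsRep

lemma mem_closure_iff_of_indep (hf : M.IsRep k f) {I : Set α} {e : α} (hI : M.Indep I)
    (he : e ∈ M.E) : e ∈ M.closure I ↔ f e ∈ span k (f '' I) := by
  by_cases heI : e ∈ I
  · exact iff_of_true (M.mem_closure_of_mem heI) (subset_span (mem_image_of_mem f heI))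
  rw [hI.mem_closure_iff_of_notMem heI, ← not_indep_iff (insert_subset he hI.subset_ground),
    hf, linearIndepOn_insert heI, not_and, not_not]
  exact ⟨fun h => h ((hf I).1 hI), fun h _ => h⟩

lemma mem_closure_iff (hf : M.IsRep k f) {X : Set α} {e : α} (hX : X ⊆ M.E) (he : e ∈ M.E) :
    e ∈ M.closure X ↔ f e ∈ span k (f '' X) := by
  obtain ⟨I, hI⟩ := M.exists_isBasis X
  have hspan : span k (f '' X) = span k (f '' I) := by
    refine le_antisymm (span_le.2 ?_) (span_mono (image_mono hI.subset))
    rintro _ ⟨x, hx, rfl⟩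
    exact (hf.mem_closure_iff_of_indep hI.indep (hX hx)).1 <|
      hI.closure_eq_closure ▸ M.mem_closure_of_mem hx
  rw [← hI.closure_eq_closure, hspan, hf.mem_closure_iff_of_indep hI.indep he]

lemma exists_linearCombination_eq_zero_of_isCircuit (hf : M.IsRep k f) {C : Set α}
    (hC : M.IsCircuit C) :
    ∃ c : α →₀ k, (c.support : Set α) = C ∧ Finsupp.linearCombination k f c = 0 := by
  obtain ⟨c, hcC, hc, hc0⟩ := linearDepOn_iff'.1 fun h => hC.not_indep ((hf C).2 h)
  refine ⟨c, hC.eq_of_dep_subset ?_ hcC, hc⟩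
  refine ⟨fun hind => ?_, hcC.trans hC.subset_ground⟩
  exact hc0 (linearIndepOn_iff.1 ((hf _).1 hind) c (Finsupp.mem_supported_support k c) hc)

lemma exists_dual_of_isCocircuit (hf : M.IsRep k f) {K : Set α} (hK : M.IsCocircuit K) :
    ∃ φ : Module.Dual k W, (∀ e ∈ K, φ (f e) ≠ 0) ∧ ∀ e ∈ M.E \ K, φ (f e) = 0 := by
  rw [isCocircuit_iff_minimal_compl_nonspanning] at hK
  have hnonspanning := hK.prop
  rw [spanning_iff_ground_subset_closure sdiff_subset, not_subset] at hnonspanning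
  obtain ⟨e₀, he₀E, he₀⟩ := hnonspanning
  rw [hf.mem_closure_iff sdiff_subset he₀E] at he₀
  obtain ⟨φ, hφe₀, hφ⟩ := exists_dual_map_eq_bot_of_notMem he₀ inferInstance
  have hφ_vanish : ∀ e ∈ M.E \ K, φ (f e) = 0 := fun e he =>
    (LinearMap.le_ker_iff_map.2 hφ) (subset_span (mem_image_of_mem f he))
  refine ⟨φ, fun e heK hφe => hφe₀ ?_, hφ_vanish⟩
  have hspan : M.Spanning (M.E \ (K \ {e})) :=
    not_not.1 <| hK.not_prop_of_ssubset (sdiff_singleton_ssubset.2 heK)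
  have hle : span k (f '' (M.E \ (K \ {e}))) ≤ LinearMap.ker φ := by
    refine span_le.2 ?_
    rintro _ ⟨x, hx, rfl⟩
    obtain rfl | hxe := eq_or_ne x e
    · exact hφe
    · exact hφ_vanish x ⟨hx.1, fun hxK => hx.2 ⟨hxK, hxe⟩⟩
  exact hle <| (hf.mem_closure_iff sdiff_subset he₀E).1 (hspan.closure_eq.symm ▸ he₀E)

end IsRep

lemma circuit_iff_isCircuit {C : Set α} : M.Circuit C ↔ M.IsCircuit C := by
  simp only [Circuit, isCircuit_def, Minimal]
  exact and_congr_right fun _ =>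
    ⟨fun h D hD hDC => (h D hD hDC).symm.subset, fun h D hD hDC => hDC.antisymm (h hD hDC)⟩

lemma cocircuit_iff_isCocircuit {K : Set α} : M.Cocircuit K ↔ M.IsCocircuit K :=
  circuit_iff_isCircuit

end Matroid

theorem stmt13_general {α : Type*} {k : Type*} [Field k]
    (M : Matroid α)
    {A : Type*} (f : α → A → k)
    (hrep : ∀ I : Set α, M.Indep I ↔ LinearIndependent k (fun e : I => f e)) :
    ∃ c d : Set α → α → k, M.IsPainting c d := by
  have hf : M.IsRep k f := hrep
  choose! c hcC hc using fun C (hC : M.IsCircuit C) =>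
    hf.exists_linearCombination_eq_zero_of_isCircuit hC
  choose! φ hφK hφ using fun K (hK : M.IsCocircuit K) => hf.exists_dual_of_isCocircuit hK
  refine ⟨fun C e => c C e, fun K e => φ K (f e), fun C hC e he => ?_, fun K hK => ?_,
    fun C K hC hK => ?_⟩
  · rw [Matroid.circuit_iff_isCircuit] at hC
    rw [← hcC C hC] at he
    exact Finsupp.mem_support_iff.1 he
  · exact hφK K (Matroid.cocircuit_iff_isCocircuit.1 hK)
  rw [Matroid.circuit_iff_isCircuit] at hC
  rw [Matroid.cocircuit_iff_isCocircuit] at hK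
  have hsupp : ((c C).support : Set α) = C := hcC C hC
  beta_reduce
  have horth := Finsupp.apply_linearCombination_eq_finsum_mem_inter (c C) (φ K) (D := K)
    fun e he heK => hφ K hK e ⟨hC.subset_ground (hsupp ▸ he), heK⟩
  rw [hsupp, hc C hC, map_zero] at horth
  exact ⟨hsupp ▸ (c C).support.finite_toSet.inter_of_left K, horth.symm⟩

/-- Every finite matroid representable over a field `k` is `k`-paintable. -/
theorem stmt13 {α : Type*} [Fintype α] {k : Type*} [Field k]
    (M : Matroid α) (hE : M.E = Set.univ)
    {A : Type*} (f : α → A → k)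
    (hrep : ∀ I : Set α, M.Indep I ↔ LinearIndependent k (fun e : I => f e)) :
    ∃ c d : Set α → α → k, M.IsPainting c d :=
  stmt13_general M f hrep
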